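/- Block realization of a transfer function with a linear polynomial part: let E_p, A_p ∈ ℝ^{r×r}, B_p ∈ ℝ^{r×m}, C_p ∈ ℝ^{m×r}, M₀, M₁ ∈ ℝ^{m×m}. Define the block matrices Ẽ = diag(E_p, M₁, 0_{m×m}), Ã = [[A_p, 0, 0],[0, 0, −I_m],[0, I_m, 0]], B̃ = [B_p; 0; I_m], C̃ = [C_p, 0, I_m], D̃ = M₀ (sizes (r+2m)×(r+2m), (r+2m)×m, m×(r+2m), m×m). Then for every s ∈ ℂ such that sE_p − A_p is invertible, the matrix sẼ − Ã is invertible and C̃(sẼ − Ã)^{-1}B̃ + D̃ = C_p(sE_p − A_p)^{-1}B_p + M₀ + s·M₁. -/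

import Mathlib

/-!
The enlarged pencil `sẼ - Ã` is block diagonal, `diag(sE_p - A_p, K(s))` with
`K(s) = [[sM₁, I], [-I, 0]]`, and `K(s)` is unimodular: its inverse is `[[0, -I], [I, sM₁]]`
for every `s`. So `C̃(sẼ - Ã)⁻¹B̃` splits into `C_p(sE_p - A_p)⁻¹B_p` plus the lower right block
of `K(s)⁻¹`, which is `sM₁`.
-/

open Matrix
open scoped ComplexOrder

/-- View a real matrix as a complex matrix. -/
noncomputable def toC {k l : Type*} (M : Matrix k l ℝ) : Matrix k l ℂ :=
  M.map (fun x => (x : ℂ))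

/-- The matrix pencil `s E - A`, viewed over `ℂ`. -/
noncomputable def pencil {n : ℕ} (E A : Matrix (Fin n) (Fin n) ℝ) (s : ℂ) :
    Matrix (Fin n) (Fin n) ℂ :=
  s • toC E - toC A

/-- The transfer function `T(s) = C (sE - A)⁻¹ B + D` of the descriptor system. -/
noncomputable def transfer {n m : ℕ} (E A : Matrix (Fin n) (Fin n) ℝ)
    (B : Matrix (Fin n) (Fin m) ℝ) (C : Matrix (Fin m) (Fin n) ℝ)
    (D : Matrix (Fin m) (Fin m) ℝ) (s : ℂ) : Matrix (Fin m) (Fin m) ℂ :=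
  toC C * (pencil E A s)⁻¹ * toC B + toC D

/-- A descriptor system is positive real if the pencil is invertible on the open right
half-plane and `T(s) + T(s)ᴴ` is positive semidefinite there. -/
def PositiveReal {n m : ℕ} (E A : Matrix (Fin n) (Fin n) ℝ)
    (B : Matrix (Fin n) (Fin m) ℝ) (C : Matrix (Fin m) (Fin n) ℝ)
    (D : Matrix (Fin m) (Fin m) ℝ) : Prop :=
  ∀ s : ℂ, 0 < s.re → (pencil E A s).det ≠ 0 ∧
    (transfer E A B C D s + (transfer E A B C D s)ᴴ).PosSemidef

/-- Complete controllability: `[αE - βA, B]` has full row rank for all `(α,β) ≠ (0,0)`. -/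
def CompletelyControllable {n m : ℕ} (E A : Matrix (Fin n) (Fin n) ℝ)
    (B : Matrix (Fin n) (Fin m) ℝ) : Prop :=
  ∀ α β : ℂ, ¬(α = 0 ∧ β = 0) →
    (fromCols (α • toC E - β • toC A) (toC B)).rank = n

/-- Complete observability: `[αE - βA; C]` has full column rank for all `(α,β) ≠ (0,0)`. -/
def CompletelyObservable {n m : ℕ} (E A : Matrix (Fin n) (Fin n) ℝ)
    (C : Matrix (Fin m) (Fin n) ℝ) : Prop :=
  ∀ α β : ℂ, ¬(α = 0 ∧ β = 0) →
    (fromRows (α • toC E - β • toC A) (toC C)).rank = n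

/-- A descriptor system `(E,A,B,C,D)` is port-Hamiltonian if it admits a pH decomposition. -/
def IsPortHamiltonian {n m : ℕ} (E A : Matrix (Fin n) (Fin n) ℝ)
    (B : Matrix (Fin n) (Fin m) ℝ) (C : Matrix (Fin m) (Fin n) ℝ)
    (D : Matrix (Fin m) (Fin m) ℝ) : Prop :=
  ∃ (J R Q : Matrix (Fin n) (Fin n) ℝ) (G P : Matrix (Fin n) (Fin m) ℝ),
    A = (J - R) * Q ∧ B = G - P ∧ C = (G + P)ᵀ * Q ∧ Jᵀ = -J ∧
    (Eᵀ * Q).PosSemidef ∧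
    (fromBlocks (Qᵀ * R * Q) (Qᵀ * P) (Pᵀ * Q) ((1/2 : ℝ) • (D + Dᵀ))).PosSemidef

/-- The KYP block matrix `[[AᵀQ + QᵀA, QᵀB - Cᵀ], [BᵀQ - C, -D - Dᵀ]]`. -/
def KYPmatrix {n m : ℕ} (A : Matrix (Fin n) (Fin n) ℝ)
    (B : Matrix (Fin n) (Fin m) ℝ) (C : Matrix (Fin m) (Fin n) ℝ)
    (D : Matrix (Fin m) (Fin m) ℝ) (Q : Matrix (Fin n) (Fin n) ℝ) :
    Matrix (Fin n ⊕ Fin m) (Fin n ⊕ Fin m) ℝ :=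
  fromBlocks (Aᵀ * Q + Qᵀ * A) (Qᵀ * B - Cᵀ) (Bᵀ * Q - C) (-D - Dᵀ)

section ComplexLift

variable {k l k' l' : Type*}

lemma toC_fromBlocks (A : Matrix k l ℝ) (B : Matrix k l' ℝ) (C : Matrix k' l ℝ)
    (D : Matrix k' l' ℝ) :
    toC (fromBlocks A B C D) = fromBlocks (toC A) (toC B) (toC C) (toC D) :=
  fromBlocks_map A B C D _

lemma toC_fromRows (A : Matrix k l ℝ) (B : Matrix k' l ℝ) :
    toC (fromRows A B) = fromRows (toC A) (toC B) :=
  fromRows_map A B _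

lemma toC_fromCols (A : Matrix k l ℝ) (B : Matrix k l' ℝ) :
    toC (fromCols A B) = fromCols (toC A) (toC B) :=
  fromCols_map A B _

lemma toC_zero : toC (0 : Matrix k l ℝ) = 0 :=
  Matrix.map_zero _ Complex.ofReal_zero

lemma toC_one [DecidableEq k] : toC (1 : Matrix k k ℝ) = 1 :=
  Matrix.map_one _ Complex.ofReal_zero Complex.ofReal_one

lemma toC_neg (A : Matrix k l ℝ) : toC (-A) = -toC A :=
  Matrix.map_neg _ Complex.ofReal_neg A

end ComplexLift

section BlockAlgebra

variable {α : Type*} {k l n o p q : Type*}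

lemma fromBlocks_sub [Sub α] (A : Matrix n l α) (B : Matrix n o α) (C : Matrix p l α)
    (D : Matrix p o α) (A' : Matrix n l α) (B' : Matrix n o α) (C' : Matrix p l α)
    (D' : Matrix p o α) :
    fromBlocks A B C D - fromBlocks A' B' C' D' =
      fromBlocks (A - A') (B - B') (C - C') (D - D') := by
  ext (_ | _) (_ | _) <;> rfl

lemma fromCols_zero_one_mul_mul_fromRows_zero_one [Semiring α] [Fintype n] [DecidableEq n]
    (N : Matrix (n ⊕ n) (n ⊕ n) α) :
    (fromCols 0 1 : Matrix n (n ⊕ n) α) * N * (fromRows 0 1 : Matrix (n ⊕ n) n α) =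
      N.toBlocks₂₂ := by
  rw [← fromBlocks_toBlocks N]
  simp [fromCols_mul_fromBlocks, fromCols_mul_fromRows]

variable [CommRing α]

lemma fromCols_mul_inv_fromBlocks_zero_mul_fromRows [Fintype p] [DecidableEq p] [Fintype q]
    [DecidableEq q] {P : Matrix p p α} {Q : Matrix q q α} (hP : IsUnit P) (hQ : IsUnit Q)
    (C₁ : Matrix k p α) (C₂ : Matrix k q α) (B₁ : Matrix p l α) (B₂ : Matrix q l α) :
    fromCols C₁ C₂ * (fromBlocks P 0 0 Q)⁻¹ * fromRows B₁ B₂ = C₁ * P⁻¹ * B₁ + C₂ * Q⁻¹ * B₂ := by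
  simp [inv_fromBlocks_zero₂₁_of_isUnit_iff _ _ _ (iff_of_true hP hQ), fromCols_mul_fromBlocks,
    fromCols_mul_fromRows]

variable [Fintype n] [DecidableEq n]

lemma fromBlocks_one_neg_one_zero_mul_eq_one (X : Matrix n n α) :
    (fromBlocks X 1 (-1) 0 : Matrix (n ⊕ n) (n ⊕ n) α) * fromBlocks 0 (-1) 1 X = 1 := by
  simp [fromBlocks_multiply, ← fromBlocks_one]

lemma isUnit_fromBlocks_one_neg_one_zero (X : Matrix n n α) :
    IsUnit (fromBlocks X 1 (-1) 0 : Matrix (n ⊕ n) (n ⊕ n) α) :=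
  .of_mul_eq_one _ (fromBlocks_one_neg_one_zero_mul_eq_one X)

lemma inv_fromBlocks_one_neg_one_zero (X : Matrix n n α) :
    (fromBlocks X 1 (-1) 0 : Matrix (n ⊕ n) (n ⊕ n) α)⁻¹ = fromBlocks 0 (-1) 1 X :=
  inv_eq_right_inv (fromBlocks_one_neg_one_zero_mul_eq_one X)

end BlockAlgebra

/-- Block realization of a transfer function with a linear polynomial
part: `C̃(sẼ - Ã)⁻¹B̃ + M₀ = C_p(sE_p - A_p)⁻¹B_p + M₀ + s·M₁`. -/
theorem block_realization_linear_part {r m : ℕ}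
    (Ep Ap : Matrix (Fin r) (Fin r) ℝ) (Bp : Matrix (Fin r) (Fin m) ℝ)
    (Cp : Matrix (Fin m) (Fin r) ℝ) (M₀ M₁ : Matrix (Fin m) (Fin m) ℝ) :
    ∀ s : ℂ, IsUnit (s • toC Ep - toC Ap) →
      IsUnit (s • toC (fromBlocks Ep 0 0
            (fromBlocks M₁ 0 0 (0 : Matrix (Fin m) (Fin m) ℝ)))
          - toC (fromBlocks Ap 0 0
            (fromBlocks 0 (-(1 : Matrix (Fin m) (Fin m) ℝ)) 1 0))) ∧
      toC (fromCols Cp (fromCols (0 : Matrix (Fin m) (Fin m) ℝ) (1 : Matrix (Fin m) (Fin m) ℝ))) *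
          (s • toC (fromBlocks Ep 0 0
              (fromBlocks M₁ 0 0 (0 : Matrix (Fin m) (Fin m) ℝ)))
            - toC (fromBlocks Ap 0 0
              (fromBlocks 0 (-(1 : Matrix (Fin m) (Fin m) ℝ)) 1 0)))⁻¹ *
          toC (fromRows Bp (fromRows 0 (1 : Matrix (Fin m) (Fin m) ℝ))) + toC M₀
        = toC Cp * (s • toC Ep - toC Ap)⁻¹ * toC Bp + toC M₀ + s • toC M₁ := by
  intro s hs
  have hpencil : s • toC (fromBlocks Ep 0 0 (fromBlocks M₁ 0 0 (0 : Matrix (Fin m) (Fin m) ℝ)))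
      - toC (fromBlocks Ap 0 0 (fromBlocks 0 (-(1 : Matrix (Fin m) (Fin m) ℝ)) 1 0))
      = fromBlocks (s • toC Ep - toC Ap) 0 0 (fromBlocks (s • toC M₁) 1 (-1) 0) := by
    simp only [toC_fromBlocks, toC_zero, toC_one, toC_neg, fromBlocks_smul, fromBlocks_sub,
      smul_zero, sub_zero, zero_sub, neg_neg]
  have hK := isUnit_fromBlocks_one_neg_one_zero (s • toC M₁)
  rw [hpencil, isUnit_fromBlocks_zero₂₁, toC_fromCols, toC_fromCols, toC_fromRows, toC_fromRows,
    toC_zero, toC_one]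
  refine ⟨⟨hs, hK⟩, ?_⟩
  -- The statement's non-square products elaborate with the `CStarMatrix` multiplication
  -- instance, which only `erw` sees through.
  erw [fromCols_mul_inv_fromBlocks_zero_mul_fromRows hs hK]
  rw [inv_fromBlocks_one_neg_one_zero, fromCols_zero_one_mul_mul_fromRows_zero_one,
    toBlocks_fromBlocks₂₂]
  exact add_right_comm _ _ _
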